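/- arXiv:2106.00177 — 3 statements merged into one kernel-verified Lean document; each statement's English description precedes it below -/
import Mathlib

section
/- Let X be a measurable space, ρ a probability measure on X, and R₁ : X ≃ [0,1]^d a measurable equivalence whose pushforward of ρ equals the uniform distribution μ on [0,1]^d. Then a measurable map R₂ : X → [0,1]^d satisfies Measure.map R₂ ρ = μ if and only if there exists a measurable map U : [0,1]^d → [0,1]^d with Measure.map U μ = μ such that R₂ = U ∘ R₁. -/
open MeasureTheory

theorem MeasurableEquiv.map_eq_iff_exists_comp {α β γ : Type*} [MeasurableSpace α]
    [MeasurableSpace β] [MeasurableSpace γ] {μ : Measure α} {ν : Measure β} {κ : Measure γ}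
    (e : α ≃ᵐ β) (he : μ.map e = ν) {f : α → γ} (hf : Measurable f) :
    μ.map f = κ ↔ ∃ U : β → γ, Measurable U ∧ ν.map U = κ ∧ f = U ∘ e := by
  constructor
  · intro hfκ
    have hU : Measurable (f ∘ e.symm) := hf.comp e.symm.measurable
    refine ⟨f ∘ e.symm, hU, ?_, by ext x; simp⟩
    rw [← he, Measure.map_map hU e.measurable, ← hfκ]
    congr 1
    ext x
    simp
  · rintro ⟨U, hU, hUκ, rfl⟩
    rw [← Measure.map_map hU e.measurable, he, hUκ]

theorem rosenblatt_related_by_uniform_map_general {d : ℕ} {X : Type*} [MeasurableSpace X]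
    (ρ : Measure X)
    (R₁ : X ≃ᵐ (Fin d → Set.Icc (0:ℝ) 1))
    (hR₁ : Measure.map R₁ ρ = (volume : Measure (Fin d → Set.Icc (0:ℝ) 1)))
    (R₂ : X → (Fin d → Set.Icc (0:ℝ) 1)) (hR₂ : Measurable R₂) :
    Measure.map R₂ ρ = (volume : Measure (Fin d → Set.Icc (0:ℝ) 1)) ↔
      ∃ U : (Fin d → Set.Icc (0:ℝ) 1) → (Fin d → Set.Icc (0:ℝ) 1),
        Measurable U ∧
        Measure.map U (volume : Measure (Fin d → Set.Icc (0:ℝ) 1)) = volume ∧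
        R₂ = U ∘ R₁ :=
  R₁.map_eq_iff_exists_comp hR₁ hR₂

/-- Any two Rosenblatt transformations for `ρ` are related by a uniform map:
given a measurable-equivalence Rosenblatt transformation `R₁` for `ρ`, a
measurable map `R₂ : X → [0,1]^d` pushes `ρ` forward to the uniform
distribution iff `R₂ = U ∘ R₁` for some measurable uniform map `U`. -/
theorem rosenblatt_related_by_uniform_map {d : ℕ} {X : Type*} [MeasurableSpace X]
    (ρ : Measure X) [IsProbabilityMeasure ρ]
    (R₁ : X ≃ᵐ (Fin d → Set.Icc (0:ℝ) 1))
    (hR₁ : Measure.map R₁ ρ = (volume : Measure (Fin d → Set.Icc (0:ℝ) 1)))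
    (R₂ : X → (Fin d → Set.Icc (0:ℝ) 1)) (hR₂ : Measurable R₂) :
    Measure.map R₂ ρ = (volume : Measure (Fin d → Set.Icc (0:ℝ) 1)) ↔
      ∃ U : (Fin d → Set.Icc (0:ℝ) 1) → (Fin d → Set.Icc (0:ℝ) 1),
        Measurable U ∧
        Measure.map U (volume : Measure (Fin d → Set.Icc (0:ℝ) 1)) = volume ∧
        R₂ = U ∘ R₁ :=
  rosenblatt_related_by_uniform_map_general ρ R₁ hR₁ R₂ hR₂
end

section
/- For every natural number n ≥ 1 and every x ∈ [0,1], the n-th iterate of the logistic map M_log(x) = 4x(1-x) is given by the closed form M_log^[n](x) = sin²(2ⁿ · arcsin(√x)). -/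
/-!
The substitution `x = sin² θ` conjugates the logistic map to angle doubling: by the
double-angle formula, `4 sin² θ (1 - sin² θ) = (2 sin θ cos θ)² = sin² (2θ)`. Hence the
`n`-th iterate acts on `θ` as multiplication by `2ⁿ`, and every `x ∈ [0,1]` is
`sin² (arcsin √x)`.
-/

open Real

theorem semiconj_sin_sq_two_mul_logistic :
    Function.Semiconj (fun θ : ℝ => sin θ ^ 2) (2 * ·) (fun x : ℝ => 4 * x * (1 - x)) := by
  intro θ
  simp only [sin_two_mul, ← cos_sq']
  ring

theorem logistic_iterate_sin_sq (n : ℕ) (θ : ℝ) :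
    (fun x : ℝ => 4 * x * (1 - x))^[n] (sin θ ^ 2) = sin (2 ^ n * θ) ^ 2 := by
  rw [← (semiconj_sin_sq_two_mul_logistic.iterate_right n).eq θ, mul_left_iterate_apply]

theorem sin_sq_arcsin_sqrt {x : ℝ} (hx : x ∈ Set.Icc (0 : ℝ) 1) :
    sin (arcsin (√x)) ^ 2 = x := by
  rw [sin_arcsin (by linarith [sqrt_nonneg x]) (sqrt_le_one.mpr hx.2), sq_sqrt hx.1]

theorem logistic_map_iterate_closed_form_general (n : ℕ) :
    ∀ x ∈ Set.Icc (0:ℝ) 1,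
      (fun x : ℝ => 4 * x * (1 - x))^[n] x =
        sin ((2:ℝ) ^ n * arcsin (Real.sqrt x)) ^ 2 := by
  intro x hx
  rw [← logistic_iterate_sin_sq, sin_sq_arcsin_sqrt hx]

/-- Closed form for the iterates of the logistic map: for every `n ≥ 1` and
every `x ∈ [0,1]`, the `n`-th iterate of `M_log x = 4x(1-x)` is
`sin²(2ⁿ arcsin √x)`. -/
theorem logistic_map_iterate_closed_form (n : ℕ) (hn : 1 ≤ n) :
    ∀ x ∈ Set.Icc (0:ℝ) 1,
      (fun x : ℝ => 4 * x * (1 - x))^[n] x =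
        sin ((2:ℝ) ^ n * arcsin (Real.sqrt x)) ^ 2 :=
  logistic_map_iterate_closed_form_general n
end

section
/- The symmetric triangular distribution on [0,1], i.e. the measure with density ρ_tri(x) = 2 - 4|x - 1/2| with respect to Lebesgue measure on [0,1], is invariant under the map M_tri : [0,1] → [0,1] defined piecewise by M_tri(x) = √2·x for 0 ≤ x ≤ 1/√8, M_tri(x) = 1 - √(1/2 - 2x²) for 1/√8 ≤ x ≤ 1/2, M_tri(x) = 1 - √(1/2 - 2(1-x)²) for 1/2 ≤ x ≤ 1 - 1/√8, and M_tri(x) = √2·(1 - x) for 1 - 1/√8 ≤ x ≤ 1: the pushforward of the triangular distribution under M_tri equals the triangular distribution. -/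
/-!
Let `F` be the distribution function of the triangular law: `F t = 2t²` on `[0, 1/2]` and
`1 - 2(1-t)²` on `[1/2, 1]`. On `[0,1]` we have `F ∘ M_tri = t₁ ∘ F`: on each of the four
pieces both sides equal `4 min(x, 1-x)²`. Since `F` is an increasing bijection of `[0,1]`, the
`x ∈ [0,1]` with `M_tri x ≤ a` are those with `t₁ (F x) ≤ F a`, i.e. `F x ≤ F a / 2` or
`F x ≥ 1 - F a / 2`: two intervals, each of mass `F a / 2`. Hence the pushforward has the same
distribution function `F` as the triangular law.
-/

open MeasureTheory Set Real

theorem MeasureTheory.Measure.ext_of_Iic_of_ae_mem_Icc {α : Type*} [TopologicalSpace α]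
    [MeasurableSpace α] [SecondCountableTopology α] [LinearOrder α] [OrderTopology α] [BorelSpace α]
    {μ ν : Measure α} [IsFiniteMeasure μ] {a b : α}
    (hμ : ∀ᵐ x ∂μ, x ∈ Icc a b) (hν : ∀ᵐ x ∂ν, x ∈ Icc a b)
    (h : ∀ t ∈ Icc a b, μ (Iic t) = ν (Iic t)) : μ = ν := by
  rcases lt_or_ge b a with hba | hab
  · have (ρ : Measure α) (hρ : ∀ᵐ x ∂ρ, x ∈ Icc a b) : ρ = 0 :=
      ae_eq_bot.1 (by simpa [Icc_eq_empty hba.not_ge] using hρ)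
    rw [this μ hμ, this ν hν]
  refine Measure.ext_of_Iic μ ν fun t => ?_
  rcases lt_or_ge t a with hta | hat
  · have (ρ : Measure α) (hρ : ∀ᵐ x ∂ρ, x ∈ Icc a b) : ρ (Iic t) = 0 :=
      measure_eq_zero_iff_ae_notMem.2 (hρ.mono fun x hx hxt => (hxt.trans_lt hta).not_ge hx.1)
    rw [this μ hμ, this ν hν]
  rcases le_or_gt t b with htb | hbt
  · exact h t ⟨hat, htb⟩
  · have (ρ : Measure α) (hρ : ∀ᵐ x ∂ρ, x ∈ Icc a b) : ρ (Iic t) = ρ (Iic b) :=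
      measure_congr (Filter.eventuallyEq_set.2
        (hρ.mono fun x hx => ⟨fun _ => hx.2, fun hxb => le_trans hxb hbt.le⟩))
    rw [this μ hμ, this ν hν, h b ⟨hab, le_rfl⟩]

noncomputable section

def triangularMeasure : Measure ℝ :=
  (volume.restrict (Icc (0:ℝ) 1)).withDensity fun x => ENNReal.ofReal (2 - 4 * |x - 1/2|)

def triangularCDF (t : ℝ) : ℝ := if t ≤ 1/2 then 2 * t ^ 2 else 1 - 2 * (1 - t) ^ 2

def tentMap (y : ℝ) : ℝ := 1 - 2 * |y - 1/2|

def triangularMap (x : ℝ) : ℝ :=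
  if x ≤ 1 / √8 then √2 * x
  else if x ≤ 1/2 then 1 - √(1/2 - 2 * x ^ 2)
  else if x ≤ 1 - 1 / √8 then 1 - √(1/2 - 2 * (1 - x) ^ 2)
  else √2 * (1 - x)

end

theorem triangularCDF_of_le {t : ℝ} (ht : t ≤ 1/2) : triangularCDF t = 2 * t ^ 2 := if_pos ht

theorem triangularCDF_of_ge {t : ℝ} (ht : 1/2 ≤ t) : triangularCDF t = 1 - 2 * (1 - t) ^ 2 := by
  rcases ht.lt_or_eq with ht | rfl
  · exact if_neg ht.not_ge
  · norm_num [triangularCDF]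

theorem triangularCDF_zero : triangularCDF 0 = 0 := by norm_num [triangularCDF]

theorem triangularCDF_one : triangularCDF 1 = 1 := by norm_num [triangularCDF]

theorem continuous_triangularCDF : Continuous triangularCDF :=
  Continuous.if_le (by fun_prop) (by fun_prop) (by fun_prop) (by fun_prop)
    fun t ht => by rw [ht]; norm_num

theorem hasDerivAt_triangularCDF (t : ℝ) :
    HasDerivAt triangularCDF (2 - 4 * |t - 1/2|) t := by
  refine hasDerivAt_of_hasDerivAt_of_ne' (g := fun t => 2 - 4 * |t - 1/2|) (x := 1/2)
    (fun y hy => ?_) continuous_triangularCDF.continuousAt (by fun_prop) t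
  rcases hy.lt_or_gt with hy | hy
  · have hF : triangularCDF =ᶠ[nhds y] fun t => 2 * t ^ 2 :=
      Filter.mem_of_superset (Iio_mem_nhds hy) fun t ht => triangularCDF_of_le ht.le
    rw [abs_of_neg (by linarith)]
    convert ((hasDerivAt_pow 2 y).const_mul 2).congr_of_eventuallyEq hF using 1
    ring
  · have hF : triangularCDF =ᶠ[nhds y] fun t => 1 - 2 * (1 - t) ^ 2 :=
      Filter.mem_of_superset (Ioi_mem_nhds hy) fun t ht => triangularCDF_of_ge ht.le
    rw [abs_of_pos (by linarith)]
    convert ((((hasDerivAt_id y).const_sub 1).pow 2).const_mul 2).const_sub 1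
      |>.congr_of_eventuallyEq hF using 1
    push_cast [id]
    ring

theorem triangularCDF_strictMonoOn : StrictMonoOn triangularCDF (Icc 0 1) := by
  refine strictMonoOn_of_deriv_pos (convex_Icc 0 1) continuous_triangularCDF.continuousOn
    fun x hx => ?_
  rw [interior_Icc] at hx
  rw [(hasDerivAt_triangularCDF x).deriv]
  have : |x - 1/2| < 1/2 := abs_sub_lt_iff.2 ⟨by linarith [hx.2], by linarith [hx.1]⟩
  linarith

instance : NullSingletonClass triangularMeasure := by
  rw [triangularMeasure]; infer_instance

theorem ae_triangularMeasure_mem_Icc : ∀ᵐ x ∂triangularMeasure, x ∈ Icc (0:ℝ) 1 :=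
  (withDensity_absolutelyContinuous _ _).ae_le (ae_restrict_mem measurableSet_Icc)

theorem triangularMeasure_inter_Icc (s : Set ℝ) :
    triangularMeasure (s ∩ Icc 0 1) = triangularMeasure s := by
  rw [← Measure.restrict_apply' measurableSet_Icc,
    Measure.restrict_eq_self_of_ae_mem ae_triangularMeasure_mem_Icc]

theorem triangularMeasure_Icc {u v : ℝ} (hu : 0 ≤ u) (huv : u ≤ v) (hv : v ≤ 1) :
    triangularMeasure (Icc u v) = ENNReal.ofReal (triangularCDF v - triangularCDF u) := by
  have hρ : ∀ x ∈ Icc u v, 0 ≤ 2 - 4 * |x - 1/2| := fun x hx => by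
    have : |x - 1/2| ≤ 1/2 := abs_sub_le_iff.2 ⟨by linarith [hx.2], by linarith [hx.1]⟩
    linarith
  rw [triangularMeasure, withDensity_apply _ measurableSet_Icc,
    Measure.restrict_restrict measurableSet_Icc, inter_eq_left.2 (Icc_subset_Icc hu hv),
    ← ofReal_integral_eq_lintegral_ofReal (by fun_prop : Continuous _).integrableOn_Icc
      ((ae_restrict_iff' measurableSet_Icc).2 (Filter.Eventually.of_forall hρ)),
    integral_Icc_eq_integral_Ioc, ← intervalIntegral.integral_of_le huv,
    intervalIntegral.integral_eq_sub_of_hasDerivAt (fun x _ => hasDerivAt_triangularCDF x)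
      ((by fun_prop : Continuous _).intervalIntegrable _ _)]

instance : IsProbabilityMeasure triangularMeasure :=
  ⟨by rw [← triangularMeasure_inter_Icc, univ_inter,
    triangularMeasure_Icc le_rfl zero_le_one le_rfl, triangularCDF_one, triangularCDF_zero,
    sub_zero, ENNReal.ofReal_one]⟩

theorem exists_triangularCDF_eq {y : ℝ} (hy : y ∈ Icc 0 1) :
    ∃ b ∈ Icc (0:ℝ) 1, triangularCDF b = y :=
  intermediate_value_Icc zero_le_one continuous_triangularCDF.continuousOn
    (by rwa [triangularCDF_zero, triangularCDF_one])

theorem triangularCDF_mem_Icc {x : ℝ} (hx : x ∈ Icc 0 1) : triangularCDF x ∈ Icc 0 1 := by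
  rw [← triangularCDF_zero, ← triangularCDF_one]
  exact ⟨triangularCDF_strictMonoOn.monotoneOn ⟨le_rfl, zero_le_one⟩ hx hx.1,
    triangularCDF_strictMonoOn.monotoneOn hx ⟨zero_le_one, le_rfl⟩ hx.2⟩

theorem tentMap_le_iff {y s : ℝ} : tentMap y ≤ s ↔ y ≤ s / 2 ∨ 1 - s / 2 ≤ y := by
  have : tentMap y ≤ s ↔ (1 - s) / 2 ≤ |y - 1/2| := by
    rw [tentMap]; constructor <;> intro h <;> linarith
  rw [this, le_abs]
  constructor <;> rintro (h | h) <;> first | (left; linarith) | (right; linarith)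

theorem triangularMeasure_setOf_tentMap_le {s : ℝ} (hs : s ∈ Icc 0 1) :
    triangularMeasure {x ∈ Icc 0 1 | tentMap (triangularCDF x) ≤ s} = ENNReal.ofReal s := by
  have hF := triangularCDF_strictMonoOn
  obtain ⟨b, hb, hFb⟩ :=
    exists_triangularCDF_eq (y := s / 2) ⟨by linarith [hs.1], by linarith [hs.2]⟩
  obtain ⟨c, hc, hFc⟩ :=
    exists_triangularCDF_eq (y := 1 - s / 2) ⟨by linarith [hs.2], by linarith [hs.1]⟩
  have hbc : b ≤ c := (hF.le_iff_le hb hc).1 (by linarith [hs.2])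
  have hset : {x ∈ Icc 0 1 | tentMap (triangularCDF x) ≤ s} = Icc 0 b ∪ Icc c 1 := by
    ext x
    rw [mem_sep_iff, tentMap_le_iff, mem_union, ← hFc, ← hFb]
    constructor
    · rintro ⟨hx, h | h⟩
      · exact Or.inl ⟨hx.1, (hF.le_iff_le hx hb).1 h⟩
      · exact Or.inr ⟨(hF.le_iff_le hc hx).1 h, hx.2⟩
    · rintro (hx | hx)
      · have hx' : x ∈ Icc (0:ℝ) 1 := ⟨hx.1, hx.2.trans hb.2⟩
        exact ⟨hx', Or.inl ((hF.le_iff_le hx' hb).2 hx.2)⟩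
      · have hx' : x ∈ Icc (0:ℝ) 1 := ⟨hc.1.trans hx.1, hx.2⟩
        exact ⟨hx', Or.inr ((hF.le_iff_le hc hx').2 hx.1)⟩
  rw [hset, measure_union₀ nullMeasurableSet_Icc
      (((subsingleton_Icc_of_ge hbc).anti fun x hx => ⟨hx.2.1, hx.1.2⟩).measure_zero _),
    triangularMeasure_Icc le_rfl hb.1 hb.2, triangularMeasure_Icc hc.1 hc.2 le_rfl,
    triangularCDF_zero, triangularCDF_one, hFb, hFc,
    ← ENNReal.ofReal_add (by linarith [hs.1]) (by linarith [hs.1])]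
  congr 1
  ring

theorem one_div_sqrt_eight : 1 / √8 = √2 / 4 := by
  rw [div_eq_div_iff (by positivity) (by norm_num), one_mul, ← sqrt_mul zero_le_two,
    show (2:ℝ) * 8 = 4 ^ 2 by norm_num, sqrt_sq zero_le_four]

theorem sqrt_two_mul_mem_Icc {u : ℝ} (hu0 : 0 ≤ u) (hu : u ≤ √2 / 4) :
    √2 * u ∈ Icc 0 (1/2) := by
  have h2 : √2 * √2 = 2 := mul_self_sqrt zero_le_two
  exact ⟨by positivity, by nlinarith [sqrt_nonneg 2]⟩

theorem one_sub_sqrt_mem_Icc {u : ℝ} (hu0 : √2 / 4 ≤ u) :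
    1 - √(1/2 - 2 * u ^ 2) ∈ Icc (1/2) 1 := by
  have h2 : √2 * √2 = 2 := mul_self_sqrt zero_le_two
  have hr : √(1/2 - 2 * u ^ 2) ≤ 1/2 := by
    rw [sqrt_le_left (by norm_num)]
    nlinarith [sqrt_nonneg 2]
  exact ⟨by linarith, by linarith [sqrt_nonneg (1/2 - 2 * u ^ 2)]⟩

theorem triangularCDF_sqrt_two_mul {u : ℝ} (hu0 : 0 ≤ u) (hu : u ≤ √2 / 4) :
    triangularCDF (√2 * u) = 4 * u ^ 2 := by
  rw [triangularCDF_of_le (sqrt_two_mul_mem_Icc hu0 hu).2, mul_pow, sq_sqrt zero_le_two]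
  ring

theorem triangularCDF_one_sub_sqrt {u : ℝ} (hu0 : √2 / 4 ≤ u) (hu : u ≤ 1/2) :
    triangularCDF (1 - √(1/2 - 2 * u ^ 2)) = 4 * u ^ 2 := by
  have h2 : √2 * √2 = 2 := mul_self_sqrt zero_le_two
  rw [triangularCDF_of_ge (one_sub_sqrt_mem_Icc hu0).1, sub_sub_cancel,
    sq_sqrt (by nlinarith [sqrt_nonneg 2])]
  ring

theorem tentMap_triangularCDF_of_le {x : ℝ} (hx0 : 0 ≤ x) (hx : x ≤ 1/2) :
    tentMap (triangularCDF x) = 4 * x ^ 2 := by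
  rw [triangularCDF_of_le hx, tentMap, abs_of_nonpos (by nlinarith)]
  ring

theorem tentMap_triangularCDF_of_ge {x : ℝ} (hx : 1/2 ≤ x) (hx1 : x ≤ 1) :
    tentMap (triangularCDF x) = 4 * (1 - x) ^ 2 := by
  rw [triangularCDF_of_ge hx, tentMap, abs_of_nonneg (by nlinarith)]
  ring

theorem measurable_triangularMap : Measurable triangularMap := by
  refine Measurable.ite measurableSet_Iic (by fun_prop) ?_
  refine Measurable.ite measurableSet_Iic (by fun_prop) ?_
  exact Measurable.ite measurableSet_Iic (by fun_prop) (by fun_prop)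

theorem triangularMap_mem_Icc {x : ℝ} (hx : x ∈ Icc 0 1) : triangularMap x ∈ Icc 0 1 := by
  obtain ⟨hx0, hx1⟩ := hx
  rw [triangularMap, one_div_sqrt_eight]
  split_ifs with h₁ h₂ h₃
  · exact Icc_subset_Icc le_rfl (by norm_num) (sqrt_two_mul_mem_Icc hx0 h₁)
  · exact Icc_subset_Icc (by norm_num) le_rfl (one_sub_sqrt_mem_Icc (not_le.1 h₁).le)
  · exact Icc_subset_Icc (by norm_num) le_rfl
      (one_sub_sqrt_mem_Icc (u := 1 - x) (by linarith))
  · exact Icc_subset_Icc le_rfl (by norm_num)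
      (sqrt_two_mul_mem_Icc (u := 1 - x) (by linarith) (by linarith))

theorem triangularCDF_triangularMap {x : ℝ} (hx : x ∈ Icc 0 1) :
    triangularCDF (triangularMap x) = tentMap (triangularCDF x) := by
  have := sqrt_two_lt_three_halves
  obtain ⟨hx0, hx1⟩ := hx
  rw [triangularMap, one_div_sqrt_eight]
  split_ifs with h₁ h₂ h₃
  · rw [triangularCDF_sqrt_two_mul hx0 h₁, tentMap_triangularCDF_of_le hx0 (by linarith)]
  · rw [triangularCDF_one_sub_sqrt (not_le.1 h₁).le h₂, tentMap_triangularCDF_of_le hx0 h₂]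
  · rw [triangularCDF_one_sub_sqrt (by linarith) (by linarith),
      tentMap_triangularCDF_of_ge (not_le.1 h₂).le hx1]
  · rw [triangularCDF_sqrt_two_mul (by linarith) (by linarith),
      tentMap_triangularCDF_of_ge (by linarith) hx1]

theorem triangularMeasure_Iic {a : ℝ} (ha : a ∈ Icc 0 1) :
    triangularMeasure (Iic a) = ENNReal.ofReal (triangularCDF a) := by
  have hset : Iic a ∩ Icc 0 1 = Icc 0 a :=
    ext fun x => ⟨fun h => ⟨h.2.1, h.1⟩, fun h => ⟨h.2, h.1, h.2.trans ha.2⟩⟩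
  rw [← triangularMeasure_inter_Icc, hset, triangularMeasure_Icc le_rfl ha.1 ha.2,
    triangularCDF_zero, sub_zero]

theorem triangularMeasure_preimage_triangularMap_Iic {a : ℝ} (ha : a ∈ Icc 0 1) :
    triangularMeasure (triangularMap ⁻¹' Iic a) = ENNReal.ofReal (triangularCDF a) := by
  have hset : triangularMap ⁻¹' Iic a ∩ Icc 0 1 =
      {x ∈ Icc 0 1 | tentMap (triangularCDF x) ≤ triangularCDF a} := by
    ext x
    rw [mem_inter_iff, mem_sep_iff, and_comm]
    refine and_congr_right fun hx => ?_
    rw [mem_preimage, mem_Iic, ← triangularCDF_triangularMap hx,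
      triangularCDF_strictMonoOn.le_iff_le (triangularMap_mem_Icc hx) ha]
  rw [← triangularMeasure_inter_Icc, hset,
    triangularMeasure_setOf_tentMap_le (triangularCDF_mem_Icc ha)]

/-- The symmetric triangular distribution on `[0,1]`, with density
`ρ_tri x = 2 - 4|x - 1/2|` with respect to Lebesgue measure on `[0,1]`, is
invariant under the piecewise map `M_tri` given by `√2 x` on `[0, 1/√8]`,
`1 - √(1/2 - 2x²)` on `[1/√8, 1/2]`, `1 - √(1/2 - 2(1-x)²)` on
`[1/2, 1 - 1/√8]`, and `√2 (1 - x)` on `[1 - 1/√8, 1]`. -/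
theorem triangular_distribution_invariant_map :
    Measure.map
        (fun x : ℝ =>
          if x ≤ 1 / Real.sqrt 8 then Real.sqrt 2 * x
          else if x ≤ 1/2 then 1 - Real.sqrt (1/2 - 2 * x ^ 2)
          else if x ≤ 1 - 1 / Real.sqrt 8 then 1 - Real.sqrt (1/2 - 2 * (1 - x) ^ 2)
          else Real.sqrt 2 * (1 - x))
        ((volume.restrict (Set.Icc (0:ℝ) 1)).withDensity
          fun x => ENNReal.ofReal (2 - 4 * |x - 1/2|)) =
      (volume.restrict (Set.Icc (0:ℝ) 1)).withDensity
        fun x => ENNReal.ofReal (2 - 4 * |x - 1/2|) := by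
  change triangularMeasure.map triangularMap = triangularMeasure
  refine Measure.ext_of_Iic_of_ae_mem_Icc ?_ ae_triangularMeasure_mem_Icc fun a ha => ?_
  · exact (ae_map_iff measurable_triangularMap.aemeasurable measurableSet_Icc).2
      (ae_triangularMeasure_mem_Icc.mono fun x hx => triangularMap_mem_Icc hx)
  · rw [Measure.map_apply measurable_triangularMap measurableSet_Iic,
      triangularMeasure_preimage_triangularMap_Iic ha, triangularMeasure_Iic ha]
end
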